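/- There exists a positive constant C such that, if p = C((log n)/n)^{1/2}, then asymptotically almost surely the random graph G(n,p) on V satisfies: for every k ∈ {1,2}, every collection 𝒮 of pairwise disjoint k-element subsets of V with |𝒮| ≤ (δ/C^k)(n/log n)^{k/2}, and every i ∈ {1,…,6} with V_i ∩ ⋃_{L∈𝒮} L = ∅, one has |N_{B(𝒮,V_i)}(𝒮)| ≥ (1−δ)C^k((log n)/n)^{k/2}|𝒮||V_i|. -/

import Mathlib

open MeasureTheory

abbrev EdgeType (n : ℕ) := {e : Sym2 (Fin n) // ¬ e.IsDiag}

noncomputable def bernoulliBool (p : ℝ) : Measure Bool :=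
  ENNReal.ofReal p • Measure.dirac true + ENNReal.ofReal (1 - p) • Measure.dirac false

instance (p : ℝ) : IsFiniteMeasure (bernoulliBool p) := by
  constructor
  simp [bernoulliBool, Measure.add_apply, Measure.smul_apply]

noncomputable def gnp (n : ℕ) (p : ℝ) : Measure (EdgeType n → Bool) :=
  Measure.pi fun _ => bernoulliBool p

def graphOf {n : ℕ} (ω : EdgeType n → Bool) : SimpleGraph (Fin n) :=
  SimpleGraph.fromEdgeSet {e | ∃ h : ¬ e.IsDiag, ω ⟨e, h⟩ = true}

noncomputable section

/-- δ = 0.01 -/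
def dlt : ℝ := 0.01
/-- ε = 0.001 -/
def eps : ℝ := 0.001

/-- The number of vertices `u ∈ U` having a neighbor in `𝒮` in the bipartite
graph `B(𝒮,U)`, i.e. such that `L ⊆ N_G(u)` for some `L ∈ 𝒮`.  This is
`|N_{B(𝒮,U)}(𝒮)|`. -/
def coveredCount {n : ℕ} (G : SimpleGraph (Fin n))
    (S : Finset (Finset (Fin n))) (U : Finset (Fin n)) : ℕ :=
  {u ∈ (U : Set (Fin n)) | ∃ L ∈ S, ∀ x ∈ L, G.Adj x u}.ncard

/-- The number of edges `e ∈ 𝓜` such that some `u ∈ U` is adjacent (in `G`)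
to both endpoints of `e`. -/
def hitCount {n : ℕ} (G : SimpleGraph (Fin n))
    (M : Finset (Finset (Fin n))) (U : Finset (Fin n)) : ℕ :=
  {e ∈ (M : Set (Finset (Fin n))) | ∃ u ∈ U, ∀ x ∈ e, G.Adj x u}.ncard

/-- `M` is a matching of `G[V₀]` of size `2εn` witnessing property (P1). -/
def P1Witness {n : ℕ} (C : ℝ) (V0 : Finset (Fin n)) (G : SimpleGraph (Fin n))
    (M : Finset (Finset (Fin n))) : Prop :=
  (∀ e ∈ M, ∃ a b : Fin n, G.Adj a b ∧ a ∈ V0 ∧ b ∈ V0 ∧ e = {a, b}) ∧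
  (∀ e ∈ M, ∀ e' ∈ M, e ≠ e' → Disjoint e e') ∧
  (M.card : ℝ) = 2 * eps * n ∧
  ∀ U : Finset (Fin n), Disjoint U (M.biUnion id) →
    (U.card : ℝ) ≤ dlt * n / (C ^ 2 * Real.log n) →
    C ^ 2 * Real.log n / (16 * n) * M.card * U.card ≤ (hitCount G M U : ℝ)

/-- Property (P1). -/
def PropP1 {n : ℕ} (C : ℝ) (V0 : Finset (Fin n)) (G : SimpleGraph (Fin n)) : Prop :=
  ∃ M : Finset (Finset (Fin n)), P1Witness C V0 G M

/-- First half of property (P2): for small families `𝒮` of disjoint `k`-sets,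
`|N_{B(𝒮,V_i)}(𝒮)| ≥ (1-δ) Cᵏ (log n / n)^{k/2} |𝒮| |V_i|`. -/
def PropP2a {n : ℕ} (C : ℝ) (V : Fin 7 → Finset (Fin n)) (G : SimpleGraph (Fin n)) : Prop :=
  ∀ k : ℕ, (k = 1 ∨ k = 2) →
    ∀ S : Finset (Finset (Fin n)), (∀ L ∈ S, L.card = k) →
      (∀ L ∈ S, ∀ L' ∈ S, L ≠ L' → Disjoint L L') →
      (S.card : ℝ) ≤ dlt / C ^ k * ((n : ℝ) / Real.log n) ^ ((k : ℝ) / 2) →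
      ∀ i : Fin 7, i ≠ 0 → Disjoint (V i) (S.biUnion id) →
        (1 - dlt) * C ^ k * (Real.log n / n) ^ ((k : ℝ) / 2) * S.card * (V i).card
          ≤ (coveredCount G S (V i) : ℝ)

/-- Second half of property (P2): for large families `𝒮` of disjoint `k`-sets and
large `U` disjoint from `⋃ 𝒮`, the bipartite graph `B(𝒮,U)` has an edge. -/
def PropP2b {n : ℕ} (C : ℝ) (G : SimpleGraph (Fin n)) : Prop :=
  ∀ k : ℕ, (k = 1 ∨ k = 2) →
    ∀ S : Finset (Finset (Fin n)), (∀ L ∈ S, L.card = k) →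
      (∀ L ∈ S, ∀ L' ∈ S, L ≠ L' → Disjoint L L') →
      Real.log n / C ^ (k - 1) * ((n : ℝ) / Real.log n) ^ ((k : ℝ) / 2) ≤ (S.card : ℝ) →
      ∀ U : Finset (Fin n), Disjoint U (S.biUnion id) →
        Real.log n / C ^ (k - 1) * ((n : ℝ) / Real.log n) ^ ((k : ℝ) / 2) ≤ (U.card : ℝ) →
        ∃ L ∈ S, ∃ u ∈ U, ∀ x ∈ L, G.Adj x u

/-- A graph `G` on `V = V₀ ∪ ⋯ ∪ V₆` is `(n,C)`-good. -/
def IsGood (n : ℕ) (C : ℝ) (V : Fin 7 → Finset (Fin n)) (G : SimpleGraph (Fin n)) : Prop :=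
  PropP1 C (V 0) G ∧ PropP2a C V G ∧ PropP2b C G

/-- `V₀, …, V₆` is a partition of the vertex set with `|V_i| = εn` for `1 ≤ i ≤ 6`
and `|V₀| = (1-6ε)n`. -/
def IsPartitionV (n : ℕ) (V : Fin 7 → Finset (Fin n)) : Prop :=
  (∀ i j : Fin 7, i ≠ j → Disjoint (V i) (V j)) ∧
  (Finset.univ.biUnion V = Finset.univ) ∧
  (∀ i : Fin 7, i ≠ 0 → ((V i).card : ℝ) = eps * n) ∧
  ((V 0).card : ℝ) = (1 - 6 * eps) * n

end

open MeasureTheory ProbabilityTheory Finset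

/-!
For `u ∈ V_i` the event "some `L ∈ 𝒮` lies in `N(u)`" depends only on the edges from `u` to
`⋃ 𝒮`, and these edge sets are disjoint for distinct `u`, so the events are independent. By
Bonferroni each has probability at least `β - β² / 2`, where `β = |𝒮| pᵏ ≤ δ`, and Chernoff's
lower-tail bound makes fewer than `(1 - δ) β |V_i|` of them occur with probability
`exp (-Ω(β |V_i|)) ≤ n^(-3|𝒮|)`, since `β |V_i| ≳ C |𝒮| log n`. Summed over all nonempty families
of `k`-sets this is at most `(1 + n⁻³)^(n choose k) - 1 = O(1/n)`, so a union bound over `𝒮`, `i`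
and `k` leaves a failure probability `O(1/n)`.
-/

section Independence

variable {ι α : Type*} [Fintype ι] [MeasurableSpace α] [MeasurableSingletonClass α] [Countable α]
  {ν : Measure α} [IsProbabilityMeasure ν]

theorem indepFun_pi_of_dependsOn {f g : (ι → α) → ℝ} {s t : Finset ι} (hst : Disjoint s t)
    (hf : DependsOn f s) (hg : DependsOn g t) : IndepFun f g (Measure.pi fun _ ↦ ν) := by
  obtain ⟨f', rfl⟩ := dependsOn_iff_exists_comp.mp hf
  obtain ⟨g', rfl⟩ := dependsOn_iff_exists_comp.mp hg
  have hcoord : iIndepFun (fun i (ω : ι → α) ↦ ω i) (Measure.pi fun _ ↦ ν) :=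
    iIndepFun_pi (X := fun _ ↦ id) fun _ ↦ aemeasurable_id
  exact (hcoord.indepFun_finset s t hst fun i ↦ measurable_pi_apply i).comp
    (Measurable.of_discrete (f := f')) (Measurable.of_discrete (f := g'))

theorem mgf_sum_pi_of_dependsOn {κ : Type*} {U : Finset κ} {s : κ → Finset ι}
    {Y : κ → (ι → α) → ℝ} (hs : (U : Set κ).PairwiseDisjoint s)
    (hY : ∀ u ∈ U, DependsOn (Y u) (s u)) (t : ℝ) :
    mgf (∑ u ∈ U, Y u) (Measure.pi fun _ ↦ ν) t = ∏ u ∈ U, mgf (Y u) (Measure.pi fun _ ↦ ν) t := by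
  classical
  induction U using Finset.induction_on with
  | empty => simp
  | insert u U hu ih =>
    have hsum : DependsOn (∑ v ∈ U, Y v) (U.biUnion s) := fun ω ω' h ↦ by
      simp only [Finset.sum_apply]
      refine Finset.sum_congr rfl fun v hv ↦ hY v (mem_insert_of_mem hv) fun i hi ↦ h i ?_
      exact mem_biUnion.mpr ⟨v, hv, hi⟩
    have hdisj : Disjoint (s u) (U.biUnion s) := (disjoint_biUnion_right _ _ _).mpr fun v hv ↦
      hs (mem_insert_self u U) (mem_insert_of_mem hv) (ne_of_mem_of_not_mem hv hu).symm
    rw [sum_insert hu, prod_insert hu,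
      (indepFun_pi_of_dependsOn hdisj (hY u (mem_insert_self u U)) hsum).mgf_add
        Measurable.of_discrete.aestronglyMeasurable Measurable.of_discrete.aestronglyMeasurable,
      ih (hs.subset (by simp)) fun v hv ↦ hY v (mem_insert_of_mem hv)]

end Independence

section Chernoff

variable {Ω : Type*} [MeasurableSpace Ω] {μ : Measure Ω} [IsProbabilityMeasure μ]

theorem mgf_indicator_one {A : Set Ω} (hA : MeasurableSet A) (t : ℝ) :
    mgf (A.indicator 1) μ t = 1 + (Real.exp t - 1) * μ.real A := by
  have hexp : (fun ω ↦ Real.exp (t * A.indicator 1 ω))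
      = fun ω ↦ 1 + (Real.exp t - 1) * A.indicator (1 : Ω → ℝ) ω := by
    funext ω
    by_cases h : ω ∈ A <;> simp [h]
  rw [mgf, hexp,
    integral_add (integrable_const 1) (((integrable_const 1).indicator hA).const_mul _),
    integral_const_mul, integral_indicator_one hA]
  simp

/-- Chernoff's lower-tail bound. -/
theorem measureReal_sum_indicator_le_le {κ : Type*} (U : Finset κ) {A : κ → Set Ω}
    (hA : ∀ u, MeasurableSet (A u)) {s q : ℝ} (hs : 0 ≤ s)
    (hmgf : mgf (∑ u ∈ U, (A u).indicator 1) μ (-s) = ∏ u ∈ U, mgf ((A u).indicator 1) μ (-s))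
    (hq : ∀ u ∈ U, q ≤ μ.real (A u)) (a : ℝ) :
    μ.real {ω | ∑ u ∈ U, (A u).indicator (1 : Ω → ℝ) ω ≤ a}
      ≤ Real.exp (s * a - (1 - Real.exp (-s)) * q * #U) := by
  set c := 1 - Real.exp (-s)
  set X : Ω → ℝ := ∑ u ∈ U, (A u).indicator 1 with hX
  have hXω : ∀ ω, X ω = ∑ u ∈ U, (A u).indicator (1 : Ω → ℝ) ω := fun ω ↦ by
    simp [hX, Finset.sum_apply]
  have hXm : Measurable X := by
    rw [show X = _ from funext hXω]
    exact Finset.measurable_sum _ fun u _ ↦ measurable_one.indicator (hA u)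
  have hXnonneg : ∀ ω, 0 ≤ X ω := fun ω ↦ by
    rw [hXω]; exact sum_nonneg fun u _ ↦ Set.indicator_nonneg (fun _ _ ↦ zero_le_one) ω
  have hint : Integrable (fun ω ↦ Real.exp (-s * X ω)) μ := by
    refine Integrable.of_bound (by fun_prop) 1 (ae_of_all _ fun ω ↦ ?_)
    rw [Real.norm_eq_abs, abs_of_pos (Real.exp_pos _), Real.exp_le_one_iff]
    nlinarith [hXnonneg ω]
  have hc : 0 ≤ c := sub_nonneg.mpr (Real.exp_le_one_iff.mpr (by linarith))
  have hfactor : ∀ u ∈ U, mgf ((A u).indicator 1) μ (-s) ≤ Real.exp (-(c * q)) := by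
    intro u hu
    rw [mgf_indicator_one (hA u)]
    calc 1 + (Real.exp (-s) - 1) * μ.real (A u) ≤ -(c * q) + 1 := by nlinarith [hq u hu]
      _ ≤ Real.exp (-(c * q)) := Real.add_one_le_exp _
  calc μ.real {ω | ∑ u ∈ U, (A u).indicator (1 : Ω → ℝ) ω ≤ a}
      = μ.real {ω | X ω ≤ a} := by simp_rw [hXω]
    _ ≤ Real.exp (- -s * a) * mgf X μ (-s) := measure_le_le_exp_mul_mgf a (by linarith) hint
    _ ≤ Real.exp (s * a) * ∏ _u ∈ U, Real.exp (-(c * q)) := by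
      rw [neg_neg, hmgf]
      gcongr with u hu
      · exact fun u _ ↦ mgf_nonneg
      · exact hfactor u hu
    _ = Real.exp (s * a - c * q * #U) := by
      rw [prod_const, ← Real.exp_nat_mul, ← Real.exp_add]
      ring_nf

end Chernoff

section Bonferroni

variable {Ω ι : Type*}

theorem cast_sub_half_offDiag_le (m : ℕ) :
    (m : ℝ) - 1 / 2 * ((m * m - m : ℕ) : ℝ) ≤ if m = 0 then 0 else 1 := by
  rcases Nat.lt_or_ge m 2 with hm | hm
  · interval_cases m <;> norm_num
  · rw [if_neg (by omega), Nat.cast_sub (Nat.le_mul_self m)]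
    have : (2 : ℝ) ≤ m := by exact_mod_cast hm
    push_cast
    nlinarith

theorem sum_indicator_sub_le_indicator_biUnion (S : Finset ι) (A : ι → Set Ω) (ω : Ω) :
    ∑ i ∈ S, (A i).indicator (1 : Ω → ℝ) ω
        - 1 / 2 * ∑ z ∈ S.offDiag, (A z.1 ∩ A z.2).indicator (1 : Ω → ℝ) ω
      ≤ (⋃ i ∈ S, A i).indicator (1 : Ω → ℝ) ω := by
  classical
  set T := S.filter (ω ∈ A ·)
  have hsum : ∑ i ∈ S, (A i).indicator (1 : Ω → ℝ) ω = #T := by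
    simp [Set.indicator_apply, sum_boole, T]
  have hpairs : ∑ z ∈ S.offDiag, (A z.1 ∩ A z.2).indicator (1 : Ω → ℝ) ω
      = ((#T * #T - #T : ℕ) : ℝ) := by
    rw [← offDiag_card]
    simp only [Set.indicator_apply, Set.mem_inter_iff, Pi.one_apply, sum_boole]
    congr 2
    ext z
    simp only [mem_filter, mem_offDiag, T]
    tauto
  have hunion : (⋃ i ∈ S, A i).indicator (1 : Ω → ℝ) ω = if #T = 0 then 0 else 1 := by
    have hmem : ω ∈ ⋃ i ∈ S, A i ↔ ¬#T = 0 := by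
      simp [T]
    rw [Set.indicator_apply, if_congr hmem rfl rfl, ite_not]
    rfl
  rw [hsum, hpairs, hunion]
  exact cast_sub_half_offDiag_le #T

variable [MeasurableSpace Ω] {μ : Measure Ω} [IsFiniteMeasure μ]

theorem sum_measureReal_sub_le_measureReal_biUnion (S : Finset ι) {A : ι → Set Ω}
    (hA : ∀ i, MeasurableSet (A i)) :
    ∑ i ∈ S, μ.real (A i) - 1 / 2 * ∑ z ∈ S.offDiag, μ.real (A z.1 ∩ A z.2)
      ≤ μ.real (⋃ i ∈ S, A i) := by
  have hint : ∀ {B : Set Ω}, MeasurableSet B → Integrable (B.indicator (1 : Ω → ℝ)) μ :=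
    fun hB ↦ (integrable_const 1).indicator hB
  have hreal : ∀ {B : Set Ω}, MeasurableSet B → μ.real B = ∫ ω, B.indicator 1 ω ∂μ :=
    fun hB ↦ (integral_indicator_one hB).symm
  have hsingles := integrable_finsetSum S fun i _ ↦ hint (hA i)
  have hpairs := integrable_finsetSum S.offDiag fun z _ ↦ hint ((hA z.1).inter (hA z.2))
  have hunion := Finset.measurableSet_biUnion S fun i _ ↦ hA i
  rw [sum_congr rfl fun i _ ↦ hreal (hA i), sum_congr rfl fun z _ ↦ hreal ((hA z.1).inter (hA z.2)),
    hreal hunion, ← integral_finsetSum _ fun i _ ↦ hint (hA i),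
    ← integral_finsetSum _ fun z _ ↦ hint ((hA z.1).inter (hA z.2)), ← integral_const_mul,
    ← integral_sub hsingles (hpairs.const_mul _)]
  exact integral_mono (hsingles.sub (hpairs.const_mul _)) (hint hunion)
    fun ω ↦ by simpa [Finset.sum_apply] using sum_indicator_sub_le_indicator_biUnion S A ω

end Bonferroni

theorem sum_powerset_nonempty_pow_card_le {α : Type*} (G : Finset α) {x : ℝ} (hx : 0 ≤ x)
    (hGx : #G * x ≤ 1) : ∑ T ∈ G.powerset with T.Nonempty, x ^ #T ≤ 2 * #G * x := by
  classical
  have hall : ∑ T ∈ G.powerset, x ^ #T = (x + 1) ^ #G := by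
    simpa using sum_pow_mul_eq_add_pow x 1 G
  have hsplit := sum_filter_add_sum_filter_not G.powerset (·.Nonempty) (fun T ↦ x ^ #T)
  rw [show G.powerset.filter (fun T ↦ ¬T.Nonempty) = {∅} by
      ext T
      simp only [mem_filter, mem_powerset, not_nonempty_iff_eq_empty, mem_singleton,
        and_iff_right_iff_imp]
      rintro rfl
      exact empty_subset G,
    sum_singleton, card_empty, pow_zero, hall] at hsplit
  have hpow : (x + 1) ^ #G ≤ Real.exp (#G * x) := by
    rw [Real.exp_nat_mul]
    exact pow_le_pow_left₀ (by linarith) (by linarith [Real.add_one_le_exp x]) _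
  have hexp := (abs_le.mp (Real.abs_exp_sub_one_le (x := #G * x)
    (by rw [abs_of_nonneg (by positivity)]; exact hGx))).2
  rw [abs_of_nonneg (by positivity)] at hexp
  linarith

section RandomGraph

variable {n : ℕ} {p : ℝ}

theorem isProbabilityMeasure_bernoulliBool (hp0 : 0 ≤ p) (hp1 : p ≤ 1) :
    IsProbabilityMeasure (bernoulliBool p) := by
  constructor
  simp only [bernoulliBool, Measure.coe_add, Measure.coe_smul, Pi.add_apply, Pi.smul_apply,
    measure_univ, smul_eq_mul, mul_one]
  rw [← ENNReal.ofReal_add hp0 (by linarith)]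
  norm_num

theorem isProbabilityMeasure_gnp (hp0 : 0 ≤ p) (hp1 : p ≤ 1) : IsProbabilityMeasure (gnp n p) := by
  have := isProbabilityMeasure_bernoulliBool hp0 hp1
  unfold gnp
  infer_instance

theorem bernoulliBool_singleton_true : bernoulliBool p {true} = ENNReal.ofReal p := by
  simp [bernoulliBool]

open Classical in
def edgesBetween (W : Finset (Fin n)) (u : Fin n) : Finset (EdgeType n) :=
  {e | ∃ x ∈ W, e.1 = s(x, u)}

theorem mem_edgesBetween {W : Finset (Fin n)} {u : Fin n} {e : EdgeType n} :
    e ∈ edgesBetween W u ↔ ∃ x ∈ W, e.1 = s(x, u) := by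
  simp [edgesBetween]

theorem graphOf_adj_iff {ω : EdgeType n → Bool} {x u : Fin n} (h : x ≠ u) :
    (graphOf ω).Adj x u ↔ ω ⟨s(x, u), by simpa using h⟩ = true := by
  simp [graphOf, h]

theorem graphOf_adj_congr {W : Finset (Fin n)} {u x : Fin n} (hu : u ∉ W) (hx : x ∈ W)
    {ω ω' : EdgeType n → Bool} (h : ∀ e ∈ edgesBetween W u, ω e = ω' e) :
    (graphOf ω).Adj x u ↔ (graphOf ω').Adj x u := by
  have hxu : x ≠ u := ne_of_mem_of_not_mem hx hu
  rw [graphOf_adj_iff hxu, graphOf_adj_iff hxu, h _ (mem_edgesBetween.mpr ⟨x, hx, rfl⟩)]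

theorem card_edgesBetween {W : Finset (Fin n)} {u : Fin n} (hu : u ∉ W) :
    #(edgesBetween W u) = #W := by
  refine (card_bij (fun x hx ↦ ⟨s(x, u), by simpa using ne_of_mem_of_not_mem hx hu⟩)
    (fun x hx ↦ mem_edgesBetween.mpr ⟨x, hx, rfl⟩) (fun x hx y _ hxy ↦ ?_) fun e he ↦ ?_).symm
  · rcases (by simpa using congrArg Subtype.val hxy : x = y ∨ x = u ∧ u = y) with h | ⟨h, -⟩
    · exact h
    · exact absurd h (ne_of_mem_of_not_mem hx hu)
  · obtain ⟨x, hx, hex⟩ := mem_edgesBetween.mp he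
    exact ⟨x, hx, Subtype.ext hex.symm⟩

theorem pairwiseDisjoint_edgesBetween {W U : Finset (Fin n)} (hU : Disjoint U W) :
    (U : Set (Fin n)).PairwiseDisjoint (edgesBetween W) := by
  intro u hu v hv huv
  refine disjoint_left.mpr fun e heu hev ↦ ?_
  obtain ⟨x, -, hx⟩ := mem_edgesBetween.mp heu
  obtain ⟨y, hy, hy'⟩ := mem_edgesBetween.mp hev
  rcases Sym2.eq_iff.mp (hx.symm.trans hy') with ⟨-, h⟩ | ⟨-, h⟩
  · exact huv h
  · exact disjoint_left.mp hU hu (h ▸ hy)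

/-- The event `L ⊆ N(u)`. -/
def subsetNeighborEvent (L : Finset (Fin n)) (u : Fin n) : Set (EdgeType n → Bool) :=
  {ω | ∀ x ∈ L, (graphOf ω).Adj x u}

theorem subsetNeighborEvent_union (L L' : Finset (Fin n)) (u : Fin n) :
    subsetNeighborEvent (L ∪ L') u = subsetNeighborEvent L u ∩ subsetNeighborEvent L' u := by
  ext ω
  simp [subsetNeighborEvent, or_imp, forall_and]

theorem subsetNeighborEvent_eq_pi {L : Finset (Fin n)} {u : Fin n} (hu : u ∉ L) :
    subsetNeighborEvent L u = (edgesBetween L u : Set (EdgeType n)).pi fun _ ↦ {true} := by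
  ext ω
  simp only [subsetNeighborEvent, Set.mem_ofPred_eq, Set.mem_pi, Set.mem_singleton_iff,
    Finset.mem_coe]
  constructor
  · intro h e he
    obtain ⟨x, hx, hex⟩ := mem_edgesBetween.mp he
    have := (graphOf_adj_iff (ne_of_mem_of_not_mem hx hu)).mp (h x hx)
    rwa [show e = ⟨s(x, u), _⟩ from Subtype.ext hex]
  · intro h x hx
    exact (graphOf_adj_iff (ne_of_mem_of_not_mem hx hu)).mpr
      (h _ (mem_edgesBetween.mpr ⟨x, hx, rfl⟩))

theorem gnp_real_subsetNeighborEvent (hp0 : 0 ≤ p) (hp1 : p ≤ 1) {L : Finset (Fin n)} {u : Fin n}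
    (hu : u ∉ L) : (gnp n p).real (subsetNeighborEvent L u) = p ^ #L := by
  have := isProbabilityMeasure_bernoulliBool hp0 hp1
  rw [measureReal_def, subsetNeighborEvent_eq_pi hu, gnp, Measure.pi_pi_finset, prod_const,
    bernoulliBool_singleton_true, card_edgesBetween hu, ← ENNReal.ofReal_pow hp0,
    ENNReal.toReal_ofReal (pow_nonneg hp0 _)]

theorem dependsOn_indicator_iUnion_subsetNeighborEvent {S : Finset (Finset (Fin n))}
    {W : Finset (Fin n)} (hSW : ∀ L ∈ S, L ⊆ W) {u : Fin n} (hu : u ∉ W) :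
    DependsOn ((⋃ L ∈ S, subsetNeighborEvent L u).indicator (1 : (EdgeType n → Bool) → ℝ))
      (edgesBetween W u) := by
  intro ω ω' h
  have hmem : ω ∈ ⋃ L ∈ S, subsetNeighborEvent L u ↔ ω' ∈ ⋃ L ∈ S, subsetNeighborEvent L u := by
    simp only [Set.mem_iUnion, subsetNeighborEvent, Set.mem_ofPred_eq, exists_prop]
    exact exists_congr fun L ↦ and_congr_right fun hL ↦
      forall₂_congr fun x hx ↦ graphOf_adj_congr hu (hSW L hL hx) h
  by_cases hω : ω ∈ ⋃ L ∈ S, subsetNeighborEvent L u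
  · rw [Set.indicator_of_mem hω, Set.indicator_of_mem (hmem.mp hω), Pi.one_apply, Pi.one_apply]
  · rw [Set.indicator_of_notMem hω, Set.indicator_of_notMem (hmem.not.mp hω)]

theorem coveredCount_graphOf (S : Finset (Finset (Fin n))) (U : Finset (Fin n))
    (ω : EdgeType n → Bool) :
    (coveredCount (graphOf ω) S U : ℝ)
      = ∑ u ∈ U, (⋃ L ∈ S, subsetNeighborEvent L u).indicator (1 : (EdgeType n → Bool) → ℝ) ω := by
  classical
  rw [coveredCount, show {u ∈ (U : Set (Fin n)) | ∃ L ∈ S, ∀ x ∈ L, (graphOf ω).Adj x u}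
      = ↑({u ∈ U | ∃ L ∈ S, ∀ x ∈ L, (graphOf ω).Adj x u}) by simp,
    Set.ncard_coe_finset, card_filter]
  push_cast
  simp [Set.indicator_apply, subsetNeighborEvent]

end RandomGraph

section Coverage

variable {n k : ℕ} {p : ℝ} {S : Finset (Finset (Fin n))}

theorem sub_sq_le_gnp_real_iUnion_subsetNeighborEvent (hp0 : 0 ≤ p) (hp1 : p ≤ 1)
    (hk : ∀ L ∈ S, #L = k) (hS : (S : Set (Finset (Fin n))).PairwiseDisjoint id) {u : Fin n}
    (hu : u ∉ S.biUnion id) :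
    #S * p ^ k - (#S * p ^ k) ^ 2 / 2 ≤ (gnp n p).real (⋃ L ∈ S, subsetNeighborEvent L u) := by
  have := isProbabilityMeasure_gnp (n := n) hp0 hp1
  have huL : ∀ L ∈ S, u ∉ L := fun L hL huL ↦ hu (mem_biUnion.mpr ⟨L, hL, huL⟩)
  have hsingle : ∀ L ∈ S, (gnp n p).real (subsetNeighborEvent L u) = p ^ k := fun L hL ↦ by
    rw [gnp_real_subsetNeighborEvent hp0 hp1 (huL L hL), hk L hL]
  have hpair : ∀ z ∈ S.offDiag,
      (gnp n p).real (subsetNeighborEvent z.1 u ∩ subsetNeighborEvent z.2 u) = p ^ (2 * k) := by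
    intro z hz
    obtain ⟨h1, h2, hne⟩ := mem_offDiag.mp hz
    rw [← subsetNeighborEvent_union, gnp_real_subsetNeighborEvent hp0 hp1
      (notMem_union.mpr ⟨huL _ h1, huL _ h2⟩),
      card_union_of_disjoint (show Disjoint z.1 z.2 from hS h1 h2 hne), hk _ h1, hk _ h2, two_mul]
  have hoff : (#S.offDiag : ℝ) ≤ #S * #S := by
    rw [offDiag_card]
    exact_mod_cast Nat.sub_le _ _
  refine le_trans ?_ (sum_measureReal_sub_le_measureReal_biUnion S fun _ ↦ .of_discrete)
  rw [sum_congr rfl hsingle, sum_congr rfl hpair, sum_const, sum_const, nsmul_eq_mul,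
    nsmul_eq_mul, pow_mul']
  nlinarith [mul_le_mul_of_nonneg_right hoff (sq_nonneg (p ^ k))]

theorem gnp_real_coveredCount_le_le (hp0 : 0 ≤ p) (hp1 : p ≤ 1) (hk : ∀ L ∈ S, #L = k)
    (hS : (S : Set (Finset (Fin n))).PairwiseDisjoint id) {U : Finset (Fin n)}
    (hU : Disjoint U (S.biUnion id)) (hβ : #S * p ^ k ≤ 1 / 100) :
    (gnp n p).real {ω | (coveredCount (graphOf ω) S U : ℝ) ≤ 99 / 100 * (#S * p ^ k) * #U}
      ≤ Real.exp (-(#S * p ^ k * #U) / 160000) := by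
  have := isProbabilityMeasure_bernoulliBool hp0 hp1
  have := isProbabilityMeasure_gnp (n := n) hp0 hp1
  set β : ℝ := #S * p ^ k
  have hβ0 : 0 ≤ β := by positivity
  have hmgf := mgf_sum_pi_of_dependsOn (ν := bernoulliBool p) (pairwiseDisjoint_edgesBetween hU)
    (fun u hu ↦ dependsOn_indicator_iUnion_subsetNeighborEvent
      (fun L hL ↦ subset_biUnion_of_mem id hL) (disjoint_left.mp hU hu)) (-(1 / 400))
  have hq : ∀ u ∈ U, 199 / 200 * β ≤ (gnp n p).real (⋃ L ∈ S, subsetNeighborEvent L u) :=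
    fun u hu ↦ le_trans (by nlinarith) (sub_sq_le_gnp_real_iUnion_subsetNeighborEvent hp0 hp1 hk hS
      (disjoint_left.mp hU hu))
  simp_rw [coveredCount_graphOf]
  refine (measureReal_sum_indicator_le_le U (fun _ ↦ .of_discrete) (by norm_num) hmgf hq _).trans ?_
  -- `1 - e^{-s} ≥ s - s²` at `s = 1/400`
  have hexp := (abs_le.mp (Real.abs_exp_sub_one_sub_id_le (x := -(1 / 400)) (by norm_num))).2
  rw [Real.exp_le_exp]
  have hU0 : (0 : ℝ) ≤ #U := Nat.cast_nonneg _
  nlinarith [mul_nonneg hβ0 hU0]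

end Coverage

noncomputable def C₀ : ℝ := 10 ^ 10

theorem C₀_pos : 0 < C₀ := by norm_num [C₀]

noncomputable def edgeProb (n : ℕ) : ℝ := C₀ * Real.sqrt (Real.log n / n)

section Asymptotics

variable {n k : ℕ}

theorem edgeProb_nonneg : 0 ≤ edgeProb n := mul_nonneg C₀_pos.le (Real.sqrt_nonneg _)

theorem edgeProb_le_one (hn : 4 * 10 ^ 40 ≤ (n : ℝ)) : edgeProb n ≤ 1 := by
  have hn0 : (0 : ℝ) < n := by linarith
  have hsqrt : 2 * 10 ^ 20 ≤ Real.sqrt n :=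
    Real.le_sqrt_of_sq_le (by nlinarith)
  have hlog : Real.log n ≤ 2 * Real.sqrt n := by
    have := Real.log_le_sub_one_of_pos (Real.sqrt_pos.mpr hn0)
    rw [Real.log_sqrt hn0.le] at this
    linarith
  have hratio : Real.log n / n ≤ (10 ^ 10)⁻¹ ^ 2 := by
    rw [div_le_iff₀ hn0]
    nlinarith [mul_le_mul_of_nonneg_right hsqrt (Real.sqrt_nonneg n), Real.mul_self_sqrt hn0.le]
  calc edgeProb n ≤ C₀ * (10 ^ 10)⁻¹ := by
        unfold edgeProb
        gcongr
        · exact C₀_pos.le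
        · exact Real.sqrt_le_iff.mpr ⟨by positivity, hratio⟩
    _ = 1 := by norm_num [C₀]

theorem rpow_div_two_eq_sqrt_pow {x : ℝ} (hx : 0 ≤ x) (k : ℕ) :
    x ^ ((k : ℝ) / 2) = Real.sqrt x ^ k := by
  rw [div_eq_mul_inv, mul_comm, Real.rpow_mul hx, Real.rpow_natCast, Real.sqrt_eq_rpow, one_div]

theorem card_mul_edgeProb_pow_le (hn : 1 < n) {s : ℝ}
    (hs : s ≤ dlt / C₀ ^ k * ((n : ℝ) / Real.log n) ^ ((k : ℝ) / 2)) :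
    s * edgeProb n ^ k ≤ 1 / 100 := by
  have hn0 : (0 : ℝ) < n := by positivity
  have hlog : 0 < Real.log n := Real.log_pos (by exact_mod_cast hn)
  have hinv : Real.sqrt (n / Real.log n) * Real.sqrt (Real.log n / n) = 1 := by
    rw [← Real.sqrt_mul (by positivity), show (n : ℝ) / Real.log n * (Real.log n / n) = 1 by
      field_simp, Real.sqrt_one]
  rw [rpow_div_two_eq_sqrt_pow (by positivity)] at hs
  calc s * edgeProb n ^ k
      ≤ dlt / C₀ ^ k * Real.sqrt (n / Real.log n) ^ k * edgeProb n ^ k := by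
        gcongr
        exact pow_nonneg edgeProb_nonneg k
    _ = dlt * (Real.sqrt (n / Real.log n) * Real.sqrt (Real.log n / n)) ^ k := by
        generalize Real.sqrt (n / Real.log n) = a
        rw [edgeProb, mul_pow, mul_pow]
        field_simp [C₀_pos.ne']
    _ = 1 / 100 := by
        rw [hinv, one_pow, mul_one]
        norm_num [dlt]

theorem shortfall_threshold_eq (s u : ℝ) :
    (1 - dlt) * C₀ ^ k * (Real.log n / n) ^ ((k : ℝ) / 2) * s * u
      = 99 / 100 * (s * edgeProb n ^ k) * u := by
  rw [rpow_div_two_eq_sqrt_pow (div_nonneg (Real.log_natCast_nonneg n) n.cast_nonneg), edgeProb,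
    mul_pow, dlt]
  ring

theorem C₀_mul_log_le_edgeProb_pow_mul (hk : k = 1 ∨ k = 2) (hn : 1 < n) :
    C₀ * Real.log n ≤ edgeProb n ^ k * n := by
  have hn0 : (0 : ℝ) < n := by positivity
  have hlog : 0 ≤ Real.log n := Real.log_natCast_nonneg n
  have hsq : edgeProb n ^ 2 * n = C₀ ^ 2 * Real.log n := by
    rw [edgeProb, mul_pow, Real.sq_sqrt (by positivity)]
    field_simp
  have hC : C₀ ≤ C₀ ^ 2 := by norm_num [C₀]
  rcases hk with rfl | rfl
  · have hlog_le : Real.log n ≤ n := (Real.log_le_sub_one_of_pos hn0).trans (by linarith)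
    rw [pow_one, ← pow_le_pow_iff_left₀ (mul_nonneg C₀_pos.le hlog)
      (mul_nonneg edgeProb_nonneg hn0.le) two_ne_zero]
    calc (C₀ * Real.log n) ^ 2 = C₀ ^ 2 * Real.log n * Real.log n := by ring
      _ ≤ C₀ ^ 2 * Real.log n * n := by gcongr
      _ = (edgeProb n * n) ^ 2 := by rw [← hsq]; ring
  · rw [hsq]
    exact mul_le_mul_of_nonneg_right hC hlog

end Asymptotics

section UnionBound

variable {n k : ℕ}

def shortfallEvent (k : ℕ) (S : Finset (Finset (Fin n))) (U : Finset (Fin n)) :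
    Set (EdgeType n → Bool) :=
  {ω | (coveredCount (graphOf ω) S U : ℝ)
    < (1 - dlt) * C₀ ^ k * (Real.log n / n) ^ ((k : ℝ) / 2) * #S * #U}

def disjointParts (V : Fin 7 → Finset (Fin n)) (S : Finset (Finset (Fin n))) : Finset (Fin 7) :=
  {i | i ≠ 0 ∧ Disjoint (V i) (S.biUnion id)}

open Classical in
/-- The families `𝒮` of (P2), except the empty one, which imposes nothing. -/
noncomputable def smallFamilies (n k : ℕ) : Finset (Finset (Finset (Fin n))) :=
  {S ∈ (powersetCard k (univ : Finset (Fin n))).powerset | S.Nonempty ∧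
    (S : Set (Finset (Fin n))).PairwiseDisjoint id ∧
    (#S : ℝ) ≤ dlt / C₀ ^ k * ((n : ℝ) / Real.log n) ^ ((k : ℝ) / 2)}

theorem gnp_real_shortfall_le (hn : 4 * 10 ^ 40 ≤ (n : ℝ)) (hk : k = 1 ∨ k = 2)
    {S : Finset (Finset (Fin n))} (hkS : ∀ L ∈ S, #L = k)
    (hS : (S : Set (Finset (Fin n))).PairwiseDisjoint id)
    (hsize : (#S : ℝ) ≤ dlt / C₀ ^ k * ((n : ℝ) / Real.log n) ^ ((k : ℝ) / 2))
    {U : Finset (Fin n)} (hU : Disjoint U (S.biUnion id)) (hUcard : (#U : ℝ) = eps * n) :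
    (gnp n (edgeProb n)).real (shortfallEvent k S U) ≤ ((n : ℝ) ^ 3)⁻¹ ^ #S := by
  have hn1 : 1 < n := by exact_mod_cast (by linarith : (1 : ℝ) < n)
  have hp1 := edgeProb_le_one hn
  have := isProbabilityMeasure_gnp (n := n) edgeProb_nonneg hp1
  have hpow : ((n : ℝ) ^ 3)⁻¹ ^ #S = Real.exp (#S * -(3 * Real.log n)) := by
    rw [Real.exp_nat_mul, Real.exp_neg, show 3 * Real.log n = Real.log ((n : ℝ) ^ 3) by
      rw [Real.log_pow]; norm_num, Real.exp_log (by positivity)]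
  have hlog := mul_le_mul_of_nonneg_left (C₀_mul_log_le_edgeProb_pow_mul hk hn1)
    (Nat.cast_nonneg (α := ℝ) #S)
  simp_rw [shortfallEvent, shortfall_threshold_eq]
  calc (gnp n (edgeProb n)).real
        {ω | (coveredCount (graphOf ω) S U : ℝ) < 99 / 100 * (#S * edgeProb n ^ k) * #U}
      ≤ (gnp n (edgeProb n)).real
        {ω | (coveredCount (graphOf ω) S U : ℝ) ≤ 99 / 100 * (#S * edgeProb n ^ k) * #U} :=
        measureReal_mono (Set.ofPred_subset_ofPred.mpr fun _ ↦ le_of_lt)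
    _ ≤ Real.exp (-(#S * edgeProb n ^ k * #U) / 160000) :=
        gnp_real_coveredCount_le_le edgeProb_nonneg hp1 hkS hS hU
          (card_mul_edgeProb_pow_le hn1 hsize)
    _ ≤ ((n : ℝ) ^ 3)⁻¹ ^ #S := by
        rw [hpow, Real.exp_le_exp, hUcard, eps]
        rw [C₀] at hlog
        nlinarith [Real.log_natCast_nonneg n, Nat.cast_nonneg (α := ℝ) #S]

theorem setOf_not_propP2a_subset (V : Fin 7 → Finset (Fin n)) :
    {ω | ¬PropP2a C₀ V (graphOf ω)} ⊆ ⋃ k ∈ ({1, 2} : Finset ℕ), ⋃ S ∈ smallFamilies n k,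
      ⋃ i ∈ disjointParts V S, shortfallEvent k S (V i) := by
  intro ω hω
  simp only [Set.mem_ofPred_eq, PropP2a, not_forall, not_le] at hω
  obtain ⟨k, hk, S, hkS, hS, hsize, i, hi, hVi, hlt⟩ := hω
  have hne : S.Nonempty := nonempty_iff_ne_empty.mpr fun h ↦ by
    simp [h, coveredCount] at hlt
  simp only [Set.mem_iUnion, exists_prop]
  refine ⟨k, by simpa using hk, S, ?_, i, by simp [disjointParts, hi, hVi], hlt⟩
  simp only [smallFamilies, mem_filter, mem_powerset]
  exact ⟨fun L hL ↦ mem_powersetCard_univ.mpr (hkS L hL), hne,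
    fun L hL L' hL' h ↦ hS L hL L' hL' h, hsize⟩

theorem sum_smallFamilies_gnp_real_shortfall_le (hn : 4 * 10 ^ 40 ≤ (n : ℝ))
    (hk : k = 1 ∨ k = 2) (V : Fin 7 → Finset (Fin n))
    (hV : ∀ i : Fin 7, i ≠ 0 → (#(V i) : ℝ) = eps * n) :
    ∑ S ∈ smallFamilies n k, ∑ i ∈ disjointParts V S,
      (gnp n (edgeProb n)).real (shortfallEvent k S (V i)) ≤ 14 / n := by
  have hn0 : (0 : ℝ) < n := by linarith
  set x : ℝ := ((n : ℝ) ^ 3)⁻¹ with hx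
  set G := powersetCard k (univ : Finset (Fin n))
  have hG : (#G : ℝ) ≤ n ^ 2 := by
    have : n.choose k ≤ n ^ 2 := (n.choose_le_pow k).trans
      (Nat.pow_le_pow_right (by exact_mod_cast hn0) (by omega))
    simpa [G] using (Nat.cast_le (α := ℝ)).mpr this
  have hGx : (#G : ℝ) * x ≤ 1 / n := by
    calc (#G : ℝ) * x ≤ n ^ 2 * x := by gcongr
      _ = 1 / n := by rw [hx]; field_simp
  calc ∑ S ∈ smallFamilies n k, ∑ i ∈ disjointParts V S,
        (gnp n (edgeProb n)).real (shortfallEvent k S (V i))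
      ≤ ∑ S ∈ smallFamilies n k, 7 * x ^ #S := by
        refine sum_le_sum fun S hS ↦ ?_
        simp only [smallFamilies, mem_filter, mem_powerset] at hS
        obtain ⟨hSG, -, hdisj, hsize⟩ := hS
        calc _ ≤ ∑ i ∈ disjointParts V S, x ^ #S := by
              refine sum_le_sum fun i hi ↦ ?_
              obtain ⟨hi0, hVi⟩ := (mem_filter.mp hi).2
              exact gnp_real_shortfall_le hn hk (fun L hL ↦ (mem_powersetCard.mp (hSG hL)).2)
                hdisj hsize hVi (hV i hi0)
          _ ≤ 7 * x ^ #S := by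
              rw [sum_const, nsmul_eq_mul]
              gcongr
              exact_mod_cast (card_filter_le _ _).trans (by simp)
    _ ≤ 7 * ∑ S ∈ G.powerset with S.Nonempty, x ^ #S := by
        rw [← mul_sum]
        gcongr
        intro S hS
        simp only [smallFamilies, mem_filter] at hS
        exact mem_filter.mpr ⟨hS.1, hS.2.1⟩
    _ ≤ 7 * (2 * #G * x) := by
        gcongr
        exact sum_powerset_nonempty_pow_card_le G (by positivity)
          (hGx.trans (div_le_one_of_le₀ (by linarith) hn0.le))
    _ ≤ 14 / n := by
        rw [show 7 * (2 * #G * x) = 14 * (#G * x) by ring, show 14 / (n : ℝ) = 14 * (1 / n) by ring]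
        gcongr

theorem gnp_real_not_propP2a_le (hn : 4 * 10 ^ 40 ≤ (n : ℝ)) (V : Fin 7 → Finset (Fin n))
    (hV : ∀ i : Fin 7, i ≠ 0 → (#(V i) : ℝ) = eps * n) :
    (gnp n (edgeProb n)).real {ω | ¬PropP2a C₀ V (graphOf ω)} ≤ 28 / n := by
  have := isProbabilityMeasure_gnp (n := n) edgeProb_nonneg (edgeProb_le_one hn)
  calc (gnp n (edgeProb n)).real {ω | ¬PropP2a C₀ V (graphOf ω)}
      ≤ ∑ k ∈ ({1, 2} : Finset ℕ), ∑ S ∈ smallFamilies n k,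
          ∑ i ∈ disjointParts V S,
            (gnp n (edgeProb n)).real (shortfallEvent k S (V i)) := by
        refine (measureReal_mono (setOf_not_propP2a_subset V) (measure_ne_top _ _)).trans
          ((measureReal_biUnion_finset_le _ _).trans (sum_le_sum fun k _ ↦ ?_))
        refine (measureReal_biUnion_finset_le _ _).trans (sum_le_sum fun S _ ↦ ?_)
        exact measureReal_biUnion_finset_le _ _
    _ ≤ ∑ k ∈ ({1, 2} : Finset ℕ), 14 / (n : ℝ) := by
        refine sum_le_sum fun k hk ↦ sum_smallFamilies_gnp_real_shortfall_le hn ?_ V hV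
        simpa using hk
    _ = 28 / n := by
        rw [sum_const]
        norm_num
        ring

end UnionBound

theorem one_sub_ofReal_le_gnp_propP2a {n : ℕ} (hn : 4 * 10 ^ 40 ≤ (n : ℝ))
    (V : Fin 7 → Finset (Fin n)) (hV : ∀ i : Fin 7, i ≠ 0 → (#(V i) : ℝ) = eps * n) :
    1 - ENNReal.ofReal (28 / n) ≤ gnp n (edgeProb n) {ω | PropP2a C₀ V (graphOf ω)} := by
  have := isProbabilityMeasure_gnp (n := n) edgeProb_nonneg (edgeProb_le_one hn)
  rw [← compl_compl {ω | PropP2a C₀ V (graphOf ω)}, Set.compl_ofPred,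
    prob_compl_eq_one_sub .of_discrete, ← ofReal_measureReal]
  exact tsub_le_tsub_left (ENNReal.ofReal_le_ofReal (gnp_real_not_propP2a_le hn V hV)) 1

theorem stmt8 :
    ∃ C : ℝ, 0 < C ∧
      ∀ V : (m : ℕ) → Fin 7 → Finset (Fin (1000 * m)),
        (∀ m : ℕ, IsPartitionV (1000 * m) (V m)) →
        Filter.Tendsto
          (fun m : ℕ =>
            gnp (1000 * m)
              (C * Real.sqrt (Real.log (1000 * m : ℕ) / (1000 * m : ℕ)))
              {ω | PropP2a C (V m) (graphOf ω)})
          Filter.atTop (nhds 1) := by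
  refine ⟨C₀, C₀_pos, fun V hV ↦ ?_⟩
  have hsize : Filter.Tendsto (fun m : ℕ ↦ ((1000 * m : ℕ) : ℝ)) Filter.atTop Filter.atTop :=
    tendsto_natCast_atTop_atTop.comp
      (Filter.tendsto_atTop_mono (fun m ↦ Nat.le_mul_of_pos_left m (by norm_num)) Filter.tendsto_id)
  have hlarge : ∀ᶠ m : ℕ in Filter.atTop, 4 * 10 ^ 40 ≤ ((1000 * m : ℕ) : ℝ) :=
    hsize.eventually_ge_atTop _
  have hlower : Filter.Tendsto (fun m : ℕ ↦ 1 - ENNReal.ofReal (28 / ((1000 * m : ℕ) : ℝ)))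
      Filter.atTop (nhds 1) := by
    simpa using ENNReal.Tendsto.sub tendsto_const_nhds
      (ENNReal.tendsto_ofReal (hsize.const_div_atTop 28)) (Or.inl ENNReal.one_ne_top)
  refine tendsto_of_tendsto_of_tendsto_of_le_of_le' hlower tendsto_const_nhds ?_ ?_
  · filter_upwards [hlarge] with m hm
    exact one_sub_ofReal_le_gnp_propP2a hm (V m) (hV m).2.2.1
  · filter_upwards [hlarge] with m hm
    have := isProbabilityMeasure_gnp (n := 1000 * m) edgeProb_nonneg (edgeProb_le_one hm)
    exact prob_le_one (μ := gnp (1000 * m) (edgeProb (1000 * m)))
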